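/- arXiv:1408.0018 — 3 statements merged into one kernel-verified Lean document; each statement's English description precedes it below -/
import Mathlib

section
/- Let L be a Lie algebra over a commutative ring and let N : L → L be a linear map satisfying N ∘ N = N and whose image is involutive. Then the Nijenhuis torsion of N satisfies T_N(T_N(X,Y), Z) = 0 for all X, Y, Z ∈ L. -/
/-- The Nijenhuis torsion of an endomorphism `N` of a Lie ring:
`T_N(X,Y) = [N X, N Y] − N [N X, Y] − N [X, N Y] + N (N [X, Y])`. -/
def nijenhuisTorsion {L : Type*} [LieRing L] (N : L → L) (X Y : L) : L :=
  ⁅N X, N Y⁆ - N ⁅N X, Y⁆ - N ⁅X, N Y⁆ + N (N ⁅X, Y⁆)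

theorem stmt_2 {R : Type*} [CommRing R] {L : Type*} [LieRing L] [LieAlgebra R L]
    (N : L →ₗ[R] L) (hN : N ∘ₗ N = N)
    (hInv : ∀ X Y : L, ⁅N X, N Y⁆ ∈ LinearMap.range N) :
    ∀ X Y Z : L, nijenhuisTorsion ⇑N (nijenhuisTorsion ⇑N X Y) Z = 0 := by
  have hNN : ∀ x : L, N (N x) = N x := fun x => LinearMap.congr_fun hN x
  have hfix : ∀ w ∈ LinearMap.range N, N w = w := by
    rintro _ ⟨x, rfl⟩; exact hNN x
  intro X Y Z
  have hNT : N (nijenhuisTorsion ⇑N X Y) = nijenhuisTorsion ⇑N X Y := by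
    unfold nijenhuisTorsion
    simp only [map_add, map_sub, hNN, hfix _ (hInv X Y)]
  set T := nijenhuisTorsion ⇑N X Y with hT
  show ⁅N T, N Z⁆ - N ⁅N T, Z⁆ - N ⁅T, N Z⁆ + N (N ⁅T, Z⁆) = 0
  have h := hfix _ (hInv T Z)
  rw [hNT, hNN] at *
  rw [h]
  abel
end

section
/- Let L be a Lie algebra over a commutative ring and let N : L → L be a linear map satisfying N ∘ N = N and whose image is involutive. Define the bracket B(X,Y) := [X,Y]_N + T_N(X,Y). Then B is antisymmetric, satisfies the Jacobi identity B(X, B(Y,Z)) + B(Y, B(Z,X)) + B(Z, B(X,Y)) = 0 for all X, Y, Z ∈ L, and N is a morphism of brackets: N (B(X,Y)) = [N X, N Y] for all X, Y ∈ L. -/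
/-- The contracted bracket `[X,Y]_N = [N X, Y] + [X, N Y] − N [X, Y]`. -/
def contractedBracket {L : Type*} [LieRing L] (N : L → L) (X Y : L) : L :=
  ⁅N X, Y⁆ + ⁅X, N Y⁆ - N ⁅X, Y⁆

/-- The Lie algebroid bracket `B(X,Y) = [X,Y]_N + T_N(X,Y)` associated to an
idempotent endomorphism `N` with involutive image. -/
def algebroidBracket {L : Type*} [LieRing L] (N : L → L) (X Y : L) : L :=
  contractedBracket N X Y + nijenhuisTorsion N X Y

theorem stmt_4 {R : Type*} [CommRing R] {L : Type*} [LieRing L] [LieAlgebra R L]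
    (N : L →ₗ[R] L) (hN : N ∘ₗ N = N)
    (hInv : ∀ X Y : L, ⁅N X, N Y⁆ ∈ LinearMap.range N) :
    (∀ X Y : L, algebroidBracket ⇑N X Y = -algebroidBracket ⇑N Y X) ∧
    (∀ X Y Z : L,
      algebroidBracket ⇑N X (algebroidBracket ⇑N Y Z) +
        algebroidBracket ⇑N Y (algebroidBracket ⇑N Z X) +
        algebroidBracket ⇑N Z (algebroidBracket ⇑N X Y) = 0) ∧
    (∀ X Y : L, N (algebroidBracket ⇑N X Y) = ⁅N X, N Y⁆) := by
  have h1 : ∀ u : L, N (N u) = N u := fun u => LinearMap.ext_iff.mp hN u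
  have h2 : ∀ X Y : L, N ⁅N X, N Y⁆ = ⁅N X, N Y⁆ := by
    intro X Y
    obtain ⟨w, hw⟩ := hInv X Y
    rw [← hw, h1]
  -- f
  set f : L → L → L := fun X Y => ⁅N X, Y⁆ + ⁅X, N Y⁆ - ⁅N X, N Y⁆ with hf
  have hB : ∀ X Y : L, algebroidBracket ⇑N X Y = ⁅N X, N Y⁆ + f X Y - N (f X Y) := by
    intro X Y
    simp only [algebroidBracket, contractedBracket, nijenhuisTorsion, hf,
      map_add, map_sub, h1, h2]
    abel
  have hNB : ∀ X Y : L, N (algebroidBracket ⇑N X Y) = ⁅N X, N Y⁆ := by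
    intro X Y
    rw [hB]
    simp only [map_add, map_sub, h1, h2]
    abel
  set g : L → L → L → L := fun X Y Z => ⁅N X, f Y Z⁆ + ⁅X, ⁅N Y, N Z⁆⁆ with hg
  have hBB : ∀ X Y Z : L,
      algebroidBracket ⇑N X (algebroidBracket ⇑N Y Z)
        = ⁅N X, ⁅N Y, N Z⁆⁆ + g X Y Z - N (g X Y Z) := by
    intro X Y Z
    rw [hB X (algebroidBracket ⇑N Y Z), hNB Y Z]
    have hfx : f X (algebroidBracket ⇑N Y Z)
        = g X Y Z - ⁅N X, N (f Y Z)⁆ := by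
      have h0 := hNB Y Z
      simp only [hf, hg]
      rw [h0, hB Y Z]
      simp only [hf, lie_add, lie_sub]
      abel
    rw [hfx]
    have : N (g X Y Z - ⁅N X, N (f Y Z)⁆) = N (g X Y Z) - ⁅N X, N (f Y Z)⁆ := by
      rw [map_sub, h2]
    rw [this]
    abel
  refine ⟨?_, ?_, hNB⟩
  · intro X Y
    rw [hB X Y, hB Y X]
    simp only [hf]
    rw [show (⁅N Y, X⁆ + ⁅Y, N X⁆ - ⁅N Y, N X⁆ : L)
        = -(⁅N X, Y⁆ + ⁅X, N Y⁆ - ⁅N X, N Y⁆) by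
      rw [← lie_skew (N Y) X, ← lie_skew Y (N X), ← lie_skew (N Y) (N X)]; abel]
    rw [← lie_skew (N Y) (N X), map_neg]
    abel
  · intro X Y Z
    rw [hBB X Y Z, hBB Y Z X, hBB Z X Y]
    have hS : g X Y Z + g Y Z X + g Z X Y = 0 := by
      have e1 := lie_jacobi (N X) (N Y) Z
      have e2 := lie_jacobi (N X) Y (N Z)
      have e3 := lie_jacobi X (N Y) (N Z)
      have e4 := lie_jacobi (N X) (N Y) (N Z)
      have expand : g X Y Z + g Y Z X + g Z X Y
          = (⁅N X, ⁅N Y, Z⁆⁆ + ⁅N Y, ⁅Z, N X⁆⁆ + ⁅Z, ⁅N X, N Y⁆⁆)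
          + (⁅N X, ⁅Y, N Z⁆⁆ + ⁅Y, ⁅N Z, N X⁆⁆ + ⁅N Z, ⁅N X, Y⁆⁆)
          + (⁅X, ⁅N Y, N Z⁆⁆ + ⁅N Y, ⁅N Z, X⁆⁆ + ⁅N Z, ⁅X, N Y⁆⁆)
          - (⁅N X, ⁅N Y, N Z⁆⁆ + ⁅N Y, ⁅N Z, N X⁆⁆ + ⁅N Z, ⁅N X, N Y⁆⁆) := by
        simp only [hg, hf, lie_add, lie_sub]
        abel
      rw [expand, e1, e2, e3, e4]
      abel
    have hNS : N (g X Y Z) + N (g Y Z X) + N (g Z X Y) = 0 := by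
      rw [← map_add, ← map_add, hS, map_zero]
    have hj := lie_jacobi (N X) (N Y) (N Z)
    have expand2 : (⁅N X, ⁅N Y, N Z⁆⁆ + g X Y Z - N (g X Y Z))
        + (⁅N Y, ⁅N Z, N X⁆⁆ + g Y Z X - N (g Y Z X))
        + (⁅N Z, ⁅N X, N Y⁆⁆ + g Z X Y - N (g Z X Y))
        = (⁅N X, ⁅N Y, N Z⁆⁆ + ⁅N Y, ⁅N Z, N X⁆⁆ + ⁅N Z, ⁅N X, N Y⁆⁆)
          + (g X Y Z + g Y Z X + g Z X Y)
          - (N (g X Y Z) + N (g Y Z X) + N (g Z X Y)) := by abel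
    rw [expand2, hj, hS, hNS]
    abel
end

section
/- Let k be a field, R a commutative k-algebra, and L a Lie algebra over k which is also an R-module; suppose given a map a assigning to each X ∈ L a k-linear map a(X) : R → R such that [X, f • Y] = f • [X, Y] + (a(X) f) • Y for all X, Y ∈ L and f ∈ R. Let N : L → L be an R-linear map with N ∘ N = N, and define B(X,Y) := [X,Y]_N + T_N(X,Y). Then B satisfies the Leibniz rule with anchor N: B(X, f • Y) = f • B(X,Y) + (a(N X) f) • Y for all X, Y ∈ L and f ∈ R. -/
theorem stmt_5 {k : Type*} [Field k] {R : Type*} [CommRing R] [Algebra k R]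
    {L : Type*} [LieRing L] [LieAlgebra k L] [Module R L]
    (a : L → R →ₗ[k] R)
    (hLeib : ∀ X Y : L, ∀ f : R, ⁅X, f • Y⁆ = f • ⁅X, Y⁆ + a X f • Y)
    (N : L →ₗ[R] L) (hN : N ∘ₗ N = N) :
    ∀ X Y : L, ∀ f : R,
      algebroidBracket ⇑N X (f • Y) =
        f • algebroidBracket ⇑N X Y + a (N X) f • Y := by
  intro X Y f
  have hN' : ∀ Z : L, N (N Z) = N Z := fun Z => LinearMap.congr_fun hN Z
  simp only [algebroidBracket, contractedBracket, nijenhuisTorsion, map_smul,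
    hLeib, map_add, hN', smul_add]
  module
end
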